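/- arXiv:2410.23286 — 2 statements merged into one kernel-verified Lean document; each statement's English description precedes it below -/
import Mathlib

section
/- The barred operators satisfy the commutation relations [X̄, Ȳ] = −iZ, [Ȳ, Z̄] = −iX, [Z̄, X̄] = −iY. -/
open Matrix Complex

noncomputable def X : Matrix (Fin 3) (Fin 3) ℂ :=
  (Real.sqrt 2 : ℂ)⁻¹ • !![0, 1, 0; 1, 0, 1; 0, 1, 0]

noncomputable def Y : Matrix (Fin 3) (Fin 3) ℂ :=
  (Real.sqrt 2 : ℂ)⁻¹ • !![0, -I, 0; I, 0, -I; 0, I, 0]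

def Z : Matrix (Fin 3) (Fin 3) ℂ := !![1, 0, 0; 0, 0, 0; 0, 0, -1]

noncomputable def Xb : Matrix (Fin 3) (Fin 3) ℂ := Y * Z + Z * Y
noncomputable def Yb : Matrix (Fin 3) (Fin 3) ℂ := Z * X + X * Z
noncomputable def Zb : Matrix (Fin 3) (Fin 3) ℂ := X * Y + Y * X
noncomputable def Xu : Matrix (Fin 3) (Fin 3) ℂ := Y ^ 2 - Z ^ 2
noncomputable def Yu : Matrix (Fin 3) (Fin 3) ℂ := Z ^ 2 - X ^ 2
noncomputable def Zu : Matrix (Fin 3) (Fin 3) ℂ := X ^ 2 - Y ^ 2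

lemma h2 : ((Real.sqrt 2 : ℝ) : ℂ) ^ 2 = 2 := by
  norm_cast
  rw [sq]
  exact Real.mul_self_sqrt (by norm_num)

lemma h2i : (((Real.sqrt 2 : ℝ) : ℂ))⁻¹ ^ 2 = 2⁻¹ := by
  rw [inv_pow, h2]

lemma h2i' : (((Real.sqrt 2 : ℝ) : ℂ))⁻¹ * (((Real.sqrt 2 : ℝ) : ℂ))⁻¹ = 2⁻¹ := by
  rw [← sq, h2i]

lemma hXb : Xb = (Real.sqrt 2 : ℂ)⁻¹ • !![0, -I, 0; I, 0, I; 0, -I, 0] := by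
  ext i j
  fin_cases i <;> fin_cases j <;>
    · simp [Xb, Y, Z, Matrix.mul_apply, Fin.sum_univ_succ, Matrix.vecHead, Matrix.vecTail]
      try ring_nf
      try simp [h2i, h2]
      try ring_nf

lemma hYb : Yb = (Real.sqrt 2 : ℂ)⁻¹ • !![0, 1, 0; 1, 0, -1; 0, -1, 0] := by
  ext i j
  fin_cases i <;> fin_cases j <;>
    · simp [Yb, X, Z, Matrix.mul_apply, Fin.sum_univ_succ, Matrix.vecHead, Matrix.vecTail]
      try ring_nf
      try simp [h2i, h2]
      try ring_nf

lemma hZb : Zb = !![0, 0, -I; 0, 0, 0; I, 0, 0] := by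
  ext i j
  fin_cases i <;> fin_cases j <;>
    · simp [Zb, X, Y, Matrix.mul_apply, Fin.sum_univ_succ, Matrix.vecHead, Matrix.vecTail]
      try ring_nf
      try simp [h2i, h2]
      try ring_nf

set_option maxHeartbeats 1000000 in
theorem comm_barred_barred :
    Xb * Yb - Yb * Xb = (-I) • Z ∧
    Yb * Zb - Zb * Yb = (-I) • X ∧
    Zb * Xb - Xb * Zb = (-I) • Y := by
  refine ⟨?_, ?_, ?_⟩ <;>
  · simp only [hXb, hYb, hZb, Matrix.smul_mul, Matrix.mul_smul, smul_smul, h2i']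
    ext i j
    fin_cases i <;> fin_cases j <;>
    · simp [X, Y, Z, Matrix.mul_apply, Fin.sum_univ_succ, Matrix.vecHead, Matrix.vecTail]
      try ring_nf
      try simp [h2i, h2]
      try ring_nf
end

section
/- Let A be a (not necessarily commutative) ring, let k and L be natural numbers with 3 ≤ k and k + 1 ≤ L, and let h : ZMod L → A satisfy [h i, h j] = 0 whenever i − j ∉ {−1, 0, 1} in ZMod L (where [a,b] := ab − ba). For j ∈ ZMod L define the nested commutator N j := [h j, [h (j+1), [⋯, [h (j+k−3), h (j+k−2)]⋯]]] involving the k−1 consecutive elements h j, …, h (j+k−2). Then Σ_{j ∈ ZMod L} [N j, h (j+k−1)] + Σ_{j ∈ ZMod L} [N j, h (j−1)] = 0. (This is the computation proving that the boosted operator C_boost = Σ_j N j satisfies len([C_boost, H]) ≤ k: the part of [C_boost, H] supported on k+1 consecutive sites vanishes.) -/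
/-- Nested commutator of a list: `nestedComm [a₁, …, aₙ] = [a₁, [a₂, [⋯, aₙ]⋯]]`. -/
def nestedComm {A : Type*} [Ring A] : List A → A
  | [] => 0
  | [a] => a
  | a :: rest => a * nestedComm rest - nestedComm rest * a

lemma bind_pure_map {α β : Type} (f : α → β) (l : List α) :
    (l >>= fun a => (pure (f a) : List β)) = l.map f :=
  (List.map_eq_flatMap (f := f) (l := l)).symm

lemma nestedComm_cons' {A : Type*} [Ring A] (a : A) (l : List A) (hl : l ≠ []) :
    nestedComm (a :: l) = a * nestedComm l - nestedComm l * a := by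
  cases l with
  | nil => exact absurd rfl hl
  | cons b l' => rfl

lemma nestedComm_concat {A : Type*} [Ring A] (c : A) (l : List A) (hl : l ≠ [])
    (hcm : ∀ a ∈ l.dropLast, a * c - c * a = 0) :
    nestedComm l * c - c * nestedComm l = nestedComm (l ++ [c]) := by
  induction l with
  | nil => exact absurd rfl hl
  | cons a l ih =>
    cases l with
    | nil => simp [nestedComm]
    | cons b l' =>
      have hac : a * c = c * a :=
        sub_eq_zero.mp (hcm a (by simp [List.dropLast_cons₂]))
      have ih' := ih (by simp) (fun x hx => hcm x (by simp [List.dropLast_cons₂, hx]))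
      have key : nestedComm (a :: b :: l') =
          a * nestedComm (b :: l') - nestedComm (b :: l') * a := rfl
      have key2 : nestedComm (a :: ((b :: l') ++ [c])) =
          a * nestedComm ((b :: l') ++ [c]) - nestedComm ((b :: l') ++ [c]) * a := by
        rw [List.cons_append]; rfl
      rw [List.cons_append, key2, key, ← ih']
      set N := nestedComm (b :: l')
      have expand : (a * N - N * a) * c - c * (a * N - N * a) -
          (a * (N * c - c * N) - (N * c - c * N) * a)
          = N * (c * a - a * c) - (c * a - a * c) * N := by noncomm_ring
      have hz : c * a - a * c = 0 := by rw [hac, sub_self]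
      apply sub_eq_zero.mp
      rw [expand, hz, mul_zero, zero_mul, sub_self]

lemma zmod_neg_cast_not_mem (L d : ℕ) [NeZero L] (h2 : 2 ≤ d) (hd : d + 2 ≤ L) :
    (-(d : ZMod L)) ∉ ({-1, 0, 1} : Set (ZMod L)) := by
  intro hmem
  rcases hmem with h1 | h1 | h1
  · have : ((d - 1 : ℕ) : ZMod L) = 0 := by
      have hd1 : (d : ZMod L) = 1 := by
        have := neg_injective h1
        simpa using this
      rw [Nat.cast_sub (by omega), hd1]; ring
    rw [ZMod.natCast_eq_zero_iff] at this
    have := Nat.le_of_dvd (by omega) this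
    omega
  · have : ((d : ℕ) : ZMod L) = 0 := by simpa using h1
    rw [ZMod.natCast_eq_zero_iff] at this
    have := Nat.le_of_dvd (by omega) this
    omega
  · have : ((d + 1 : ℕ) : ZMod L) = 0 := by
      push_cast
      rw [show (d : ZMod L) = -1 from by rw [← h1]; ring]
      ring
    rw [ZMod.natCast_eq_zero_iff] at this
    have := Nat.le_of_dvd (by omega) this
    omega

theorem boost_commutator_vanishes {A : Type*} [Ring A] (k L : ℕ) [NeZero L]
    (hk : 3 ≤ k) (hkL : k + 1 ≤ L) (h : ZMod L → A)
    (hcomm : ∀ i j : ZMod L, i - j ∉ ({-1, 0, 1} : Set (ZMod L)) →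
      h i * h j - h j * h i = 0) :
    let N : ZMod L → A := fun j =>
      nestedComm ((List.range (k - 1)).map fun t => h (j + (t : ZMod L)))
    (∑ j : ZMod L, (N j * h (j + (k : ZMod L) - 1) - h (j + (k : ZMod L) - 1) * N j))
      + (∑ j : ZMod L, (N j * h (j - 1) - h (j - 1) * N j)) = 0 := by
  intro N
  have hN : ∀ j : ZMod L,
      N j = nestedComm ((List.range (k - 1)).map fun t : ℕ => h (j + (t : ZMod L))) := by
    intro j
    show nestedComm _ = _
    rw [bind_pure_map (fun t : ℕ => (t : ZMod L)), List.map_map]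
    rfl
  set C : ZMod L → A := fun j =>
    nestedComm ((List.range k).map fun t : ℕ => h (j + (t : ZMod L))) with hC
  -- Step A
  have stepA : ∀ j : ZMod L,
      N j * h (j + (k : ZMod L) - 1) - h (j + (k : ZMod L) - 1) * N j = C j := by
    intro j
    rw [hN]
    have hne : ((List.range (k - 1)).map fun t : ℕ => h (j + (t : ZMod L))) ≠ [] := by
      simp only [ne_eq, List.map_eq_nil_iff, List.range_eq_nil]
      omega
    rw [nestedComm_concat (h (j + (k : ZMod L) - 1)) _ hne ?hdrop]
    case hdrop =>
      intro a ha
      have hk2 : k - 1 = (k - 2) + 1 := by omega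
      rw [hk2, List.range_succ, List.map_append, List.map_singleton,
        List.dropLast_concat] at ha
      simp only [List.mem_map, List.mem_range] at ha
      obtain ⟨t, ht, rfl⟩ := ha
      apply hcomm
      have hdiff : (j + (t : ZMod L)) - (j + (k : ZMod L) - 1)
          = -((k - 1 - t : ℕ) : ZMod L) := by
        rw [Nat.cast_sub (by omega), Nat.cast_sub (by omega)]
        push_cast
        ring
      rw [hdiff]
      exact zmod_neg_cast_not_mem L (k - 1 - t) (by omega) (by omega)
    · simp only [hC]
      have hk1 : k = (k - 1) + 1 := by omega
      conv_rhs => rw [hk1, List.range_succ]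
      rw [List.map_append, List.map_singleton]
      congr 3
      rw [Nat.cast_sub (by omega : 1 ≤ k)]
      push_cast
      ring
  -- Step B
  have stepB : ∀ j : ZMod L,
      N j * h (j - 1) - h (j - 1) * N j = -C (j - 1) := by
    intro j
    rw [hN]
    have hCj : C (j - 1) = nestedComm (h (j - 1) ::
        ((List.range (k - 1)).map fun t : ℕ => h (j + (t : ZMod L)))) := by
      simp only [hC]
      congr 1
      have hk1 : k = (k - 1) + 1 := by omega
      conv_lhs => rw [hk1, List.range_succ_eq_map]
      rw [List.map_cons, List.map_map]
      congr 1
      · norm_num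
      · apply List.map_congr_left
        intro t ht
        simp only [Function.comp_apply, Nat.succ_eq_add_one]
        congr 1
        push_cast
        ring
    have hne : ((List.range (k - 1)).map fun t : ℕ => h (j + (t : ZMod L))) ≠ [] := by
      simp only [ne_eq, List.map_eq_nil_iff, List.range_eq_nil]
      omega
    rw [hCj, nestedComm_cons' _ _ hne, neg_sub]
  rw [Finset.sum_congr rfl (fun j _ => stepA j), Finset.sum_congr rfl (fun j _ => stepB j)]
  have hsum : ∑ j : ZMod L, C (j - 1) = ∑ j : ZMod L, C j :=
    Equiv.sum_comp (Equiv.subRight (1 : ZMod L)) C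
  rw [Finset.sum_neg_distrib, hsum]
  exact add_neg_cancel _
end
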